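/- arXiv:1604.03459 — 8 statements merged into one kernel-verified Lean document; each statement's English description precedes it below -/
import Mathlib

section
/- Let G be a finite abelian group and p a prime dividing |G|. Then G has an arithmetically-free subset X with |X|/|G| = 1 - 1/p. -/
/-!
Map `G` onto `ZMod p` by a homomorphism `π`, which exists by the structure theorem since
`p ∣ |G|`, and take `X = π⁻¹(ZMod p \ {0})`. In `ZMod p` any progression `x + n • y` with
`y ≠ 0` passes through `0`, so `ZMod p \ {0}` is arithmetically free, and this property pulls back
along homomorphisms. All fibres of `π` have the size of its kernel, so `X` has density `1 - 1/p`.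
-/

/-- The paper's condition `x + ⟨y⟩ ⊄ X`, with `⟨y⟩` replaced by `{n • y | n : ℕ}`; the two agree
in a finite group. -/
def IsArithmeticallyFree {G : Type*} [AddMonoid G] (X : Set G) : Prop :=
  ¬ ∃ x ∈ X, ∃ y ∈ X, ∀ n : ℕ, x + n • y ∈ X

theorem IsArithmeticallyFree.preimage {G H : Type*} [AddMonoid G] [AddMonoid H] {S : Set H}
    (hS : IsArithmeticallyFree S) (f : G →+ H) : IsArithmeticallyFree (f ⁻¹' S) := by
  rintro ⟨x, hx, y, hy, h⟩
  exact hS ⟨f x, hx, f y, hy, fun n => by simpa using h n⟩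

theorem ZMod.isArithmeticallyFree_compl_zero (p : ℕ) [Fact p.Prime] :
    IsArithmeticallyFree ({0}ᶜ : Set (ZMod p)) := by
  rintro ⟨x, -, y, hy, h⟩
  apply h (-x / y).val
  simp [nsmul_eq_mul, div_mul_cancel₀ _ hy]

theorem AddCommGroup.exists_surjective_zmod_of_prime_dvd_card {G : Type*} [AddCommGroup G]
    [Finite G] {p : ℕ} (hp : p.Prime) (hdvd : p ∣ Nat.card G) :
    ∃ f : G →+ ZMod p, Function.Surjective f := by
  obtain ⟨ι, _, n, -, ⟨e⟩⟩ := AddCommGroup.equiv_directSum_zmod_of_finite' G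
  let e' : G ≃+ ∀ i, ZMod (n i) :=
    e.trans (DirectSum.linearEquivFunOnFintype ℤ ι _).toAddEquiv
  have hcard : Nat.card G = ∏ i, n i := by simp [Nat.card_congr e'.toEquiv, Nat.card_pi]
  obtain ⟨i, -, hi⟩ := hp.prime.exists_mem_finset_dvd (hcard ▸ hdvd)
  refine ⟨(ZMod.castHom hi (ZMod p)).toAddMonoidHom.comp
    ((Pi.evalAddMonoidHom _ i).comp e'.toAddMonoidHom), ?_⟩
  exact (ZMod.castHom_surjective hi).comp ((Function.surjective_eval i).comp e'.surjective)

namespace AddMonoidHom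

variable {G H : Type*} [AddGroup G] [AddGroup H] {f : G →+ H}

theorem card_eq_card_mul_card_ker (hf : Function.Surjective f) :
    Nat.card G = Nat.card H * Nat.card f.ker := by
  rw [← f.ker.index_mul_card, AddSubgroup.index_ker, f.range_eq_top.mpr hf, AddSubgroup.card_top]

theorem card_mul_ncard_preimage_compl_zero [Finite G] (hf : Function.Surjective f) :
    Nat.card H * (f ⁻¹' {0}ᶜ).ncard = (Nat.card H - 1) * Nat.card G := by
  have hker : (f ⁻¹' {0}).ncard = Nat.card f.ker := rfl
  rw [Set.preimage_compl, Set.ncard_compl, hker, card_eq_card_mul_card_ker hf, Nat.mul_sub,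
    Nat.sub_mul, one_mul]

end AddMonoidHom

/-- If a prime `p` divides the order of a finite abelian group `G`, then `G` has an
arithmetically-free subset of density `1 - 1/p`. -/
theorem arithmeticallyFree_of_density {G : Type*} [AddCommGroup G] [Fintype G] (p : ℕ)
    (hp : p.Prime) (hdvd : p ∣ Fintype.card G) :
    ∃ X : Finset G, (¬ ∃ x ∈ X, ∃ y ∈ X, ∀ n : ℕ, x + n • y ∈ X) ∧
      p * X.card = (p - 1) * Fintype.card G := by
  classical
  have := Fact.mk hp
  obtain ⟨f, hf⟩ := AddCommGroup.exists_surjective_zmod_of_prime_dvd_card hp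
    (Nat.card_eq_fintype_card (α := G) ▸ hdvd)
  refine ⟨(f ⁻¹' {0}ᶜ).toFinset, ?_, ?_⟩
  · have hfree : IsArithmeticallyFree ((f ⁻¹' {0}ᶜ).toFinset : Set G) := by
      rw [Set.coe_toFinset]
      exact (ZMod.isArithmeticallyFree_compl_zero p).preimage f
    exact hfree
  · have hdensity := f.card_mul_ncard_preimage_compl_zero hf
    rwa [Nat.card_zmod, Set.ncard_eq_toFinset_card', Nat.card_eq_fintype_card] at hdensity
end

section
/- (Growth or capture) Let (G,+) be an abelian group, X ⊆ G \ {0} a finite subset, and S = (a_1, ..., a_k) a sequence of elements of X. Then either |SubSum(S)| ≥ k+1, or SubSum(S) contains a full arithmetic progression a, a+b, a+2b, ... with increment b ∈ X. -/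
/-!
Let `T j` be the set of sub-sums of the first `j` terms, so `T 0 = {0}`, the `T j` increase,
and `T (j + 1) ⊇ T j + a_j`. If every inclusion `T j ⊆ T (j + 1)` for `j < k` is strict, then
`|T k| ≥ k + 1`. Otherwise `T (j + 1) = T j` for some `j`, so `T j` is closed under adding `a_j`
and contains the whole progression `0, a_j, 2 a_j, …`.
-/

open Finset

theorem Finset.add_one_le_card_or_exists_eq_succ {α : Type*} (T : ℕ → Finset α)
    (hT : Monotone T) (h0 : (T 0).Nonempty) (k : ℕ) :
    k + 1 ≤ #(T k) ∨ ∃ j < k, T (j + 1) = T j := by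
  induction k with
  | zero => exact Or.inl (card_pos.mpr h0)
  | succ k ih =>
    rcases ih with hk | ⟨j, hj, hstable⟩
    · by_cases hstable : T (k + 1) = T k
      · exact Or.inr ⟨k, k.lt_succ_self, hstable⟩
      · have hlt := card_lt_card ((hT (k.le_add_right 1)).ssubset_of_ne (Ne.symm hstable))
        exact Or.inl (by omega)
    · exact Or.inr ⟨j, by omega, hstable⟩

theorem add_nsmul_mem_of_forall_add_mem {M : Type*} [AddMonoid M] {s : Set M} {c b : M}
    (hc : c ∈ s) (hs : ∀ x ∈ s, x + b ∈ s) (n : ℕ) : c + n • b ∈ s := by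
  induction n with
  | zero => simpa using hc
  | succ n ih => simpa [succ_nsmul, add_assoc] using hs _ ih

section PrefixSubSums

variable {M : Type*} [AddCommMonoid M] [DecidableEq M] {k : ℕ} (a : Fin k → M)

def prefixSubSums (j : ℕ) : Finset M :=
  ((univ.filter fun i : Fin k => (i : ℕ) < j).powerset).image fun I => ∑ i ∈ I, a i

variable {a}

theorem mem_prefixSubSums {j : ℕ} {g : M} :
    g ∈ prefixSubSums a j ↔
      ∃ I : Finset (Fin k), (∀ i ∈ I, (i : ℕ) < j) ∧ ∑ i ∈ I, a i = g := by
  simp [prefixSubSums, subset_iff]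

theorem zero_mem_prefixSubSums (j : ℕ) : (0 : M) ∈ prefixSubSums a j :=
  mem_prefixSubSums.mpr ⟨∅, by simp, sum_empty⟩

variable (a) in
theorem prefixSubSums_mono : Monotone (prefixSubSums a) := by
  intro j j' hjj' g hg
  obtain ⟨I, hI, rfl⟩ := mem_prefixSubSums.mp hg
  exact mem_prefixSubSums.mpr ⟨I, fun i hi => (hI i hi).trans_le hjj', rfl⟩

theorem add_mem_prefixSubSums_succ {j : ℕ} (hj : j < k) {x : M} (hx : x ∈ prefixSubSums a j) :
    x + a ⟨j, hj⟩ ∈ prefixSubSums a (j + 1) := by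
  obtain ⟨I, hI, rfl⟩ := mem_prefixSubSums.mp hx
  have hjI : (⟨j, hj⟩ : Fin k) ∉ I := fun hmem => (hI _ hmem).false
  refine mem_prefixSubSums.mpr ⟨insert ⟨j, hj⟩ I, ?_, by rw [sum_insert hjI, add_comm]⟩
  simp only [mem_insert, forall_eq_or_imp]
  exact ⟨j.lt_succ_self, fun i hi => (hI i hi).trans j.lt_succ_self⟩

theorem coe_prefixSubSums_self :
    (prefixSubSums a k : Set M) = {g : M | ∃ I : Finset (Fin k), ∑ i ∈ I, a i = g} := by
  ext g
  simp only [mem_coe, mem_prefixSubSums, Set.mem_ofPred_eq, Fin.is_lt, implies_true, true_and]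

end PrefixSubSums

theorem subSum_growth_or_capture_general {G : Type*} [AddCommGroup G] (X : Set G)
    (k : ℕ) (a : Fin k → G) (ha : ∀ i, a i ∈ X) :
    k + 1 ≤ {g : G | ∃ I : Finset (Fin k), ∑ i ∈ I, a i = g}.ncard ∨
      ∃ c ∈ {g : G | ∃ I : Finset (Fin k), ∑ i ∈ I, a i = g}, ∃ b ∈ X,
        ∀ n : ℕ, c + n • b ∈ {g : G | ∃ I : Finset (Fin k), ∑ i ∈ I, a i = g} := by
  classical
  rw [← coe_prefixSubSums_self, Set.ncard_coe_finset]
  obtain hgrow | ⟨j, hj, hstable⟩ := Finset.add_one_le_card_or_exists_eq_succ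
    (prefixSubSums a) (prefixSubSums_mono a) ⟨0, zero_mem_prefixSubSums 0⟩ k
  · exact Or.inl hgrow
  · have hclosed :
        ∀ x ∈ (prefixSubSums a j : Set G), x + a ⟨j, hj⟩ ∈ (prefixSubSums a j : Set G) :=
      fun x hx => hstable ▸ add_mem_prefixSubSums_succ hj hx
    refine Or.inr ⟨0, zero_mem_prefixSubSums k, a ⟨j, hj⟩, ha _, fun n => ?_⟩
    exact prefixSubSums_mono a hj.le
      (add_nsmul_mem_of_forall_add_mem (zero_mem_prefixSubSums j) hclosed n)

/-- Growth or capture: for a sequence `a₁, …, a_k` on a finite set `X ⊆ G \ {0}`, either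
the set of sub-sums has at least `k+1` elements, or it contains a full arithmetic
progression with increment in `X`. -/
theorem subSum_growth_or_capture {G : Type*} [AddCommGroup G] (X : Set G) (hX : X.Finite)
    (h0 : (0 : G) ∉ X) (k : ℕ) (a : Fin k → G) (ha : ∀ i, a i ∈ X) :
    k + 1 ≤ {g : G | ∃ I : Finset (Fin k), ∑ i ∈ I, a i = g}.ncard ∨
      ∃ c ∈ {g : G | ∃ I : Finset (Fin k), ∑ i ∈ I, a i = g}, ∃ b ∈ X,
        ∀ n : ℕ, c + n • b ∈ {g : G | ∃ I : Finset (Fin k), ∑ i ∈ I, a i = g} :=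
  subSum_growth_or_capture_general X k a ha
end

section
/- Let X be a finite arithmetically-free subset of an abelian group (G,+). Then for all a, b_1, ..., b_{|X|} ∈ X there exists a subset I ⊆ {1, ..., |X|} with a + Σ_{i ∈ I} b_i ∉ X. -/
/-!
Let `Σ(s)` be the set of subset sums of `(bᵢ)_{i ∈ s}`. Adding one index `j` gives
`Σ(s ∪ {j}) = Σ(s) ∪ (Σ(s) + bⱼ)`, so either `Σ` grows by at least one element, or
`Σ(s) + bⱼ ⊆ Σ(s)` and, as `0 ∈ Σ(s)`, the whole progression `ℕ • bⱼ` is captured in `Σ(s)`.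
If every partial sum `a + Σ` stayed inside `X`, then `|Σ| ≤ |X|` forbids growth at every one of
the `|X|` steps, so some progression `a + ℕ • bⱼ` lies in `X`.
-/

open Finset

theorem nsmul_mem_of_add_mem {G : Type*} [AddMonoid G] {T : Set G} {y : G} (h0 : 0 ∈ T)
    (hT : ∀ x ∈ T, x + y ∈ T) (n : ℕ) : n • y ∈ T := by
  induction n with
  | zero => simpa using h0
  | succ n ih => simpa [succ_nsmul] using hT _ ih

section SubsetSums

variable {ι G : Type*} [AddCommMonoid G] [DecidableEq G]

def subsetSums (b : ι → G) (s : Finset ι) : Finset G :=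
  s.powerset.image fun I => ∑ i ∈ I, b i

variable (b : ι → G)

theorem zero_mem_subsetSums (s : Finset ι) : 0 ∈ subsetSums b s :=
  mem_image.2 ⟨∅, empty_mem_powerset s, sum_empty⟩

@[simp]
theorem subsetSums_empty : subsetSums b ∅ = {0} := by
  simp [subsetSums]

theorem subsetSums_mono {s t : Finset ι} (h : s ⊆ t) : subsetSums b s ⊆ subsetSums b t :=
  image_subset_image (powerset_mono.2 h)

theorem subsetSums_insert [DecidableEq ι] {s : Finset ι} {j : ι} (hj : j ∉ s) :
    subsetSums b (insert j s) = subsetSums b s ∪ (subsetSums b s).image (· + b j) := by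
  have hsum : ∀ I ∈ s.powerset, ∑ i ∈ insert j I, b i = (∑ i ∈ I, b i) + b j := fun I hI =>
    (sum_insert fun hjI => hj (mem_powerset.1 hI hjI)).trans (add_comm _ _)
  rw [subsetSums, powerset_insert, image_union, image_image, subsetSums, image_image]
  exact congrArg _ (image_congr hsum)

theorem card_lt_card_subsetSums_or_nsmul_mem [DecidableEq ι] (s : Finset ι) :
    #s < #(subsetSums b s) ∨ ∃ j ∈ s, ∀ n : ℕ, n • b j ∈ subsetSums b s := by
  induction s using Finset.induction_on with
  | empty => simp
  | insert j s hj ih =>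
    have hsub := subsetSums_mono b (subset_insert j s)
    rcases ih with hgrow | ⟨i, hi, hcap⟩
    · by_cases heq : subsetSums b (insert j s) = subsetSums b s
      · refine Or.inr ⟨j, mem_insert_self j s, ?_⟩
        have hclosed : ∀ x ∈ subsetSums b s, x + b j ∈ subsetSums b s := fun x hx => by
          rw [← heq, subsetSums_insert b hj]
          exact mem_union_right _ (mem_image_of_mem _ hx)
        rw [heq]
        exact nsmul_mem_of_add_mem (zero_mem_subsetSums b s) hclosed
      · left
        have := card_lt_card (ssubset_of_subset_of_ne hsub (Ne.symm heq))
        rw [card_insert_of_notMem hj]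
        omega
    · exact Or.inr ⟨i, mem_insert_of_mem hi, fun n => hsub (hcap n)⟩

end SubsetSums

/-- Quantitative form with `δ = |X|`: if `X` is arithmetically-free, then for all
`a, b₁, …, b_{|X|} ∈ X` some partial sum escapes: `a + ∑_{i ∈ I} bᵢ ∉ X`. -/
theorem arithmeticallyFree_escape {G : Type*} [AddCommGroup G] (X : Finset G)
    (hfree : ¬ ∃ x ∈ X, ∃ y ∈ X, ∀ n : ℕ, x + n • y ∈ X) :
    ∀ a ∈ X, ∀ b : Fin X.card → G, (∀ i, b i ∈ X) →
      ∃ I : Finset (Fin X.card), a + ∑ i ∈ I, b i ∉ X := by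
  classical
  intro a ha b hb
  by_contra! hstay
  have hsub : (subsetSums b univ).image (a + ·) ⊆ X := by
    simp only [subset_iff, subsetSums, mem_image]
    rintro _ ⟨_, ⟨I, -, rfl⟩, rfl⟩
    exact hstay I
  rcases card_lt_card_subsetSums_or_nsmul_mem b univ with hgrow | ⟨j, -, hcap⟩
  · have hcard := card_le_card hsub
    rw [card_image_of_injective _ (add_right_injective a)] at hcard
    rw [card_univ, Fintype.card_fin] at hgrow
    omega
  · exact hfree ⟨a, ha, b j, hb j, fun n => hsub (mem_image_of_mem _ (hcap n))⟩
end

section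
/- A finite abelian group (T,+) admits a good-ordering if and only if T is cyclic. Moreover, if T is cyclic with generator t and |T| = n, then the ordering t < 2t < ... < nt = 0 is a good-ordering. -/
/-- `r` is a good-ordering of the subset `X` of an abelian group: a (strict) total order
on `X` such that there are no `x, y ∈ X` with `x + y ∈ X` and `x < x + y < y`. -/
def IsGoodOrdering {G : Type*} [AddCommGroup G] (X : Set G) (r : G → G → Prop) : Prop :=
  (∀ x ∈ X, ¬ r x x) ∧
  (∀ x ∈ X, ∀ y ∈ X, ∀ z ∈ X, r x y → r y z → r x z) ∧
  (∀ x ∈ X, ∀ y ∈ X, x ≠ y → r x y ∨ r y x) ∧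
  (∀ x ∈ X, ∀ y ∈ X, x + y ∈ X → ¬ (r x (x + y) ∧ r (x + y) y))

/-!
If `a` is the least nonzero element of a good-ordering, then for `y ≠ 0, y + a ≠ 0` we have
`a < a + y`, so goodness forbids `a + y < y`, i.e. `y < y + a`. Were some `z` outside the
multiples of `a`, the walk `z, z + a, z + 2a, …` would avoid `0`, hence increase strictly, and
still return to `z`. Conversely, in `t < 2t < ⋯ < nt`, from `x = it`, `x + y = jt` with `i < j`
we get `y = (j - i)t`, which comes before `x + y`.
-/

open Set

section Multiples

variable {G : Type*}

lemma nsmul_injOn_Icc_one_addOrderOf [AddLeftCancelMonoid G] (t : G) :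
    InjOn (· • t) (Icc 1 (addOrderOf t)) := by
  intro i hi j hj hij
  have hpred : (i - 1) • t = (j - 1) • t := by
    apply add_left_cancel (a := t)
    simpa only [← succ_nsmul', Nat.sub_add_cancel hi.1, Nat.sub_add_cancel hj.1] using hij
  have := nsmul_injOn_Iio_addOrderOf (x := t) (mem_Iio.2 (by grind)) (mem_Iio.2 (by grind)) hpred
  grind

lemma IsOfFinAddOrder.exists_mem_Icc_nsmul_eq [AddGroup G] {t x : G} (ht : IsOfFinAddOrder t)
    (hx : x ∈ AddSubgroup.zmultiples t) : ∃ i ∈ Icc 1 (addOrderOf t), i • t = x := by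
  classical
  obtain ⟨i, hi, rfl⟩ := Finset.mem_image.1 (ht.mem_zmultiples_iff_mem_range_addOrderOf.1 hx)
  rcases Nat.eq_zero_or_pos i with rfl | hpos
  · exact ⟨addOrderOf t, ⟨ht.addOrderOf_pos, le_rfl⟩, by rw [addOrderOf_nsmul_eq_zero, zero_nsmul]⟩
  · exact ⟨i, ⟨hpos, (Finset.mem_range.1 hi).le⟩, rfl⟩

end Multiples

def nsmulOrder {G : Type*} [AddCommGroup G] (t : G) (n : ℕ) (x y : G) : Prop :=
  ∃ i j : ℕ, 1 ≤ i ∧ i < j ∧ j ≤ n ∧ x = i • t ∧ y = j • t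

lemma isGoodOrdering_nsmulOrder {G : Type*} [AddCommGroup G] {t : G} (ht : IsOfFinAddOrder t) :
    IsGoodOrdering (AddSubgroup.zmultiples t : Set G) (nsmulOrder t (addOrderOf t)) := by
  have hinj := nsmul_injOn_Icc_one_addOrderOf t
  refine ⟨?irrefl, ?trans, ?total, ?good⟩
  case irrefl =>
    rintro x - ⟨i, j, hi, hij, hj, rfl, hx⟩
    exact hij.ne (hinj ⟨hi, by omega⟩ ⟨by omega, hj⟩ hx)
  case trans =>
    rintro x - y - z - ⟨i, j, hi, hij, hj, rfl, rfl⟩ ⟨j', k, hj', hjk, hk, hy, rfl⟩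
    obtain rfl : j = j' := hinj ⟨by omega, hj⟩ ⟨hj', by omega⟩ hy
    exact ⟨i, k, hi, hij.trans hjk, hk, rfl, rfl⟩
  case total =>
    intro x hx y hy hxy
    obtain ⟨i, hi, rfl⟩ := ht.exists_mem_Icc_nsmul_eq hx
    obtain ⟨j, hj, rfl⟩ := ht.exists_mem_Icc_nsmul_eq hy
    rcases lt_or_gt_of_ne (ne_of_apply_ne (· • t) hxy) with h | h
    · exact .inl ⟨i, j, hi.1, h, hj.2, rfl, rfl⟩
    · exact .inr ⟨j, i, hj.1, h, hi.2, rfl, rfl⟩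
  case good =>
    rintro x - y - - ⟨⟨i, j, hi, hij, hj, rfl, hxy⟩, ⟨j', k, hj', hjk, hk, hxy', rfl⟩⟩
    obtain rfl : j = j' := hinj ⟨by omega, hj⟩ ⟨hj', by omega⟩ (hxy.symm.trans hxy')
    have hdiff : (j - i) • t = k • t := by
      rw [sub_nsmul t hij.le, ← hxy]
      abel
    have := hinj ⟨by omega, by omega⟩ ⟨by omega, hk⟩ hdiff
    omega

namespace IsGoodOrdering

variable {G : Type*} [AddCommGroup G] {r : G → G → Prop}

lemma isStrictOrder (hr : IsGoodOrdering (univ : Set G) r) : IsStrictOrder G r where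
  irrefl x := hr.1 x trivial
  trans x y z := hr.2.1 x trivial y trivial z trivial

lemma rel_of_ne_of_not_rel (hr : IsGoodOrdering (univ : Set G) r) {x y : G} (hxy : x ≠ y)
    (hyx : ¬ r y x) : r x y :=
  (hr.2.2.1 x trivial y trivial hxy).resolve_right hyx

lemma rel_add_of_isMinNonzero (hr : IsGoodOrdering (univ : Set G) r) {a y : G} (ha : a ≠ 0)
    (hmin : ∀ z, z ≠ 0 → z ≠ a → r a z) (hy : y ≠ 0) (hya : y + a ≠ 0) : r y (y + a) := by
  have haya : r a (a + y) := hmin _ (by rwa [add_comm]) (by simpa using hy)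
  have hnot : ¬ r (a + y) y := fun h => hr.2.2.2 a trivial y trivial trivial ⟨haya, h⟩
  rw [add_comm]
  exact hr.rel_of_ne_of_not_rel (by simpa using ha) hnot

lemma mem_zmultiples_of_isMinNonzero [Finite G] (hr : IsGoodOrdering (univ : Set G) r) {a : G}
    (ha : a ≠ 0) (hmin : ∀ z, z ≠ 0 → z ≠ a → r a z) (z : G) :
    z ∈ AddSubgroup.zmultiples a := by
  have := hr.isStrictOrder
  by_contra hz
  have hwalk (m : ℕ) : z + m • a ≠ 0 := by
    intro h
    rw [eq_neg_of_add_eq_zero_left h] at hz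
    exact hz (neg_mem (nsmul_mem (AddSubgroup.mem_zmultiples a) m))
  have hstep (m : ℕ) : r (z + m • a) (z + (m + 1) • a) := by
    have := hwalk (m + 1)
    rw [succ_nsmul, ← add_assoc] at this ⊢
    exact hr.rel_add_of_isMinNonzero ha hmin (hwalk m) this
  have hloop := Nat.rel_of_forall_rel_succ_of_lt r hstep (addOrderOf_pos a)
  simp only [zero_smul, add_zero, addOrderOf_nsmul_eq_zero] at hloop
  exact irrefl_of r z hloop

lemma isAddCyclic [Finite G] (hr : IsGoodOrdering (univ : Set G) r) : IsAddCyclic G := by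
  have := hr.isStrictOrder
  rcases subsingleton_or_nontrivial G with _ | _
  · exact isAddCyclic_of_subsingleton
  obtain ⟨a, ha, hmin⟩ := (Finite.wellFounded_of_trans_of_irrefl r).has_min {z | z ≠ 0}
    (exists_ne 0)
  exact ⟨a, hr.mem_zmultiples_of_isMinNonzero ha fun z hz hza =>
    hr.rel_of_ne_of_not_rel (Ne.symm hza) (hmin z hz)⟩

end IsGoodOrdering

/-- A finite abelian group admits a good-ordering iff it is cyclic; moreover, for a
generator `t` the ordering `t < 2t < ⋯ < nt = 0` is a good-ordering. -/
theorem goodOrdering_iff_cyclic {T : Type*} [AddCommGroup T] [Fintype T] :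
    ((∃ r : T → T → Prop, IsGoodOrdering (Set.univ : Set T) r) ↔ IsAddCyclic T) ∧
    (∀ t : T, (∀ x : T, x ∈ AddSubgroup.zmultiples t) →
      IsGoodOrdering (Set.univ : Set T)
        (fun x y => ∃ i j : ℕ, 1 ≤ i ∧ i < j ∧ j ≤ Fintype.card T ∧
          x = i • t ∧ y = j • t)) := by
  have hgen (t : T) (ht : ∀ x : T, x ∈ AddSubgroup.zmultiples t) :
      IsGoodOrdering univ (nsmulOrder t (Fintype.card T)) := by
    have hcard : Fintype.card T = addOrderOf t := by
      rw [addOrderOf_eq_card_of_forall_mem_zmultiples ht, Nat.card_eq_fintype_card]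
    have huniv : (AddSubgroup.zmultiples t : Set T) = univ := eq_univ_of_forall ht
    simpa only [hcard, huniv] using isGoodOrdering_nsmulOrder (isOfFinAddOrder_of_finite t)
  exact ⟨⟨fun ⟨_, hr⟩ => hr.isAddCyclic, fun ⟨t, ht⟩ => ⟨_, hgen t ht⟩⟩, hgen⟩
end

section
/- Let π : G → H be a surjective homomorphism of abelian groups and let Y ⊆ H \ {0} admit a good-ordering. Then X := π⁻¹(Y) admits a good-ordering, and hence so does every subset of X. -/
theorem IsGoodOrdering.mono {G : Type*} [AddCommGroup G] {X X' : Set G} {r : G → G → Prop}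
    (h : IsGoodOrdering X r) (hsub : X' ⊆ X) : IsGoodOrdering X' r := by
  obtain ⟨hirr, htrans, htot, hgood⟩ := h
  exact ⟨fun x hx => hirr x (hsub hx),
    fun x hx y hy z hz => htrans x (hsub hx) y (hsub hy) z (hsub hz),
    fun x hx y hy => htot x (hsub hx) y (hsub hy),
    fun x hx y hy hxy => hgood x (hsub hx) y (hsub hy) (hsub hxy)⟩

section FiberLex

variable {G H : Type*} (π : G → H) (r : H → H → Prop) (w : G → G → Prop)

def FiberLex (x y : G) : Prop :=
  r (π x) (π y) ∨ (π x = π y ∧ w x y)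

variable {π r w}

theorem fiberLex_iff_of_ne {x y : G} (h : π x ≠ π y) : FiberLex π r w x y ↔ r (π x) (π y) := by
  simp only [FiberLex, h, false_and, or_false]

variable [IsStrictTotalOrder G w] {Y : Set H}

theorem fiberLex_irrefl (hirr : ∀ a ∈ Y, ¬ r a a) {x : G} (hx : π x ∈ Y) :
    ¬ FiberLex π r w x x := by
  rintro (h | ⟨-, h⟩)
  · exact hirr _ hx h
  · exact irrefl x h

theorem fiberLex_trans (htrans : ∀ a ∈ Y, ∀ b ∈ Y, ∀ c ∈ Y, r a b → r b c → r a c)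
    {x y z : G} (hx : π x ∈ Y) (hy : π y ∈ Y) (hz : π z ∈ Y) :
    FiberLex π r w x y → FiberLex π r w y z → FiberLex π r w x z := by
  rintro (hxy | ⟨hxy, hw⟩) (hyz | ⟨hyz, hw'⟩)
  · exact Or.inl (htrans _ hx _ hy _ hz hxy hyz)
  · exact Or.inl (hyz ▸ hxy)
  · exact Or.inl (hxy ▸ hyz)
  · exact Or.inr ⟨hxy.trans hyz, _root_.trans hw hw'⟩

theorem fiberLex_total (htot : ∀ a ∈ Y, ∀ b ∈ Y, a ≠ b → r a b ∨ r b a)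
    {x y : G} (hx : π x ∈ Y) (hy : π y ∈ Y) (hxy : x ≠ y) :
    FiberLex π r w x y ∨ FiberLex π r w y x := by
  by_cases he : π x = π y
  · rcases trichotomous_of w x y with h | h | h
    · exact Or.inl (Or.inr ⟨he, h⟩)
    · exact absurd h hxy
    · exact Or.inr (Or.inr ⟨he.symm, h⟩)
  · rw [fiberLex_iff_of_ne he, fiberLex_iff_of_ne (Ne.symm he)]
    exact htot _ hx _ hy he

end FiberLex

theorem IsGoodOrdering.preimage {G H : Type*} [AddCommGroup G] [AddCommGroup H] (π : G →+ H)
    {Y : Set H} (h0 : (0 : H) ∉ Y) {r : H → H → Prop} (hr : IsGoodOrdering Y r)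
    (w : G → G → Prop) [IsStrictTotalOrder G w] : IsGoodOrdering (π ⁻¹' Y) (FiberLex π r w) := by
  obtain ⟨hirr, htrans, htot, hgood⟩ := hr
  refine ⟨fun x hx => fiberLex_irrefl hirr hx,
    fun x hx y hy z hz => fiberLex_trans htrans hx hy hz,
    fun x hx y hy => fiberLex_total htot hx hy, ?_⟩
  rintro x (hx : π x ∈ Y) y (hy : π y ∈ Y) (hxy : π (x + y) ∈ Y) ⟨hlt, hlt'⟩
  have hne : π x ≠ π (x + y) := by
    rw [map_add, ne_eq, left_eq_add]
    exact ne_of_mem_of_not_mem hy h0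
  have hne' : π (x + y) ≠ π y := by
    rw [map_add, ne_eq, add_eq_right]
    exact ne_of_mem_of_not_mem hx h0
  rw [fiberLex_iff_of_ne hne] at hlt
  rw [fiberLex_iff_of_ne hne'] at hlt'
  rw [map_add] at hxy hlt hlt'
  exact hgood _ hx _ hy hxy ⟨hlt, hlt'⟩

theorem preimage_goodOrdering_general {G H : Type*} [AddCommGroup G] [AddCommGroup H] (π : G →+ H)
    (Y : Set H) (h0 : (0 : H) ∉ Y)
    (hY : ∃ r : H → H → Prop, IsGoodOrdering Y r) :
    (∃ r : G → G → Prop, IsGoodOrdering (π ⁻¹' Y) r) ∧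
      ∀ X ⊆ π ⁻¹' Y, ∃ r : G → G → Prop, IsGoodOrdering X r := by
  obtain ⟨r, hr⟩ := hY
  have hpre := hr.preimage π h0 WellOrderingRel
  exact ⟨⟨_, hpre⟩, fun X hX => ⟨_, hpre.mono hX⟩⟩

/-- If `π : G → H` is surjective and `Y ⊆ H \ {0}` admits a good-ordering, then so does
`π ⁻¹' Y`, and hence so does every subset of it. -/
theorem preimage_goodOrdering {G H : Type*} [AddCommGroup G] [AddCommGroup H] (π : G →+ H)
    (hπ : Function.Surjective π) (Y : Set H) (h0 : (0 : H) ∉ Y)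
    (hY : ∃ r : H → H → Prop, IsGoodOrdering Y r) :
    (∃ r : G → G → Prop, IsGoodOrdering (π ⁻¹' Y) r) ∧
      ∀ X ⊆ π ⁻¹' Y, ∃ r : G → G → Prop, IsGoodOrdering X r :=
  preimage_goodOrdering_general π Y h0 hY
end

section
/- Every finite subset X of the multiplicative group (F^×, ·) of a field F admits a good-ordering. -/
/-!
Embed the subgroup `H` generated by `X` into the circle `ℝ/ℤ` and order `X` by the
representatives in `[0, 1)`: the representative of `u + v` is either the sum of those of `u` and
`v` (hence at least that of `v`) or that sum minus `1` (hence below that of `u`), so it never lies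
strictly between them. By the structure theorem `H ≃ ℤⁿ × P` with `P` finite, and `P` is cyclic
because finite subgroups of `Fˣ` are. Then `P ≅ ℤ/m` embeds as `k ↦ k/m`, and `ℤⁿ` embeds as
`v ↦ ∑ vᵢ αⁱ⁺¹` for a transcendental `α`; no nonzero element of the latter image is torsion, so
the sum of the two embeddings is injective.
-/

open Function Polynomial
open scoped DirectSum

/-- `r` is a good-ordering of the subset `X` of a (multiplicative) abelian group. -/
def IsMulGoodOrdering {G : Type*} [CommGroup G] (X : Set G) (r : G → G → Prop) : Prop :=
  (∀ x ∈ X, ¬ r x x) ∧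
  (∀ x ∈ X, ∀ y ∈ X, ∀ z ∈ X, r x y → r y z → r x z) ∧
  (∀ x ∈ X, ∀ y ∈ X, x ≠ y → r x y ∨ r y x) ∧
  (∀ x ∈ X, ∀ y ∈ X, x * y ∈ X → ¬ (r x (x * y) ∧ r (x * y) y))

theorem Int.not_fract_lt_fract_add_lt_fract {R : Type*} [CommRing R] [LinearOrder R]
    [IsStrictOrderedRing R] [FloorRing R] (a b : R) :
    ¬ (fract a < fract (a + b) ∧ fract (a + b) < fract b) := by
  rintro ⟨hab, hb⟩
  obtain ⟨z, hz⟩ := fract_add a b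
  have h₁ : (-1 : R) < z := by linarith [fract_lt_one b]
  have h₂ : (z : R) < 0 := by linarith [fract_nonneg a]
  have h₁' : -1 < z := by exact_mod_cast h₁
  have h₂' : z < 0 := by exact_mod_cast h₂
  omega

section GoodOrdering

variable {𝕜 : Type*} [Field 𝕜] [LinearOrder 𝕜] [IsStrictOrderedRing 𝕜] [FloorRing 𝕜]
  {p : 𝕜} [Fact (0 < p)]

theorem AddCircle.not_equivIco_lt_add_lt (u v : AddCircle p) :
    ¬ ((equivIco p 0 u : 𝕜) < equivIco p 0 (u + v) ∧
      (equivIco p 0 (u + v) : 𝕜) < equivIco p 0 v) := by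
  induction u using QuotientAddGroup.induction_on with | H a => ?_
  induction v using QuotientAddGroup.induction_on with | H b => ?_
  have hp : 0 < p := Fact.out
  rw [← coe_add, coe_equivIco_mk_apply, coe_equivIco_mk_apply, coe_equivIco_mk_apply,
    mul_lt_mul_iff_of_pos_right hp, mul_lt_mul_iff_of_pos_right hp, add_div]
  exact Int.not_fract_lt_fract_add_lt_fract _ _

theorem IsMulGoodOrdering.of_injOn_addCircle {G : Type*} [CommGroup G]
    (φ : Additive G →+ AddCircle p) {S : Set G} (hφ : S.InjOn (φ ∘ Additive.ofMul)) :
    IsMulGoodOrdering S (fun x y =>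
      (AddCircle.equivIco p 0 (φ (.ofMul x)) : 𝕜) < AddCircle.equivIco p 0 (φ (.ofMul y))) := by
  refine ⟨fun x _ => lt_irrefl _, fun x _ y _ z _ => lt_trans, fun x hx y hy hne => ?_,
    fun x _ y _ _ => ?_⟩
  · refine lt_or_gt_of_ne fun h => hne (hφ hx hy ?_)
    simpa [Subtype.coe_inj] using h
  · simpa only [ofMul_mul, map_add] using AddCircle.not_equivIco_lt_add_lt _ _

end GoodOrdering

theorem IsMulGoodOrdering.image {H G : Type*} [CommGroup H] [CommGroup G] {f : H →* G}
    (hf : Injective f) {S : Set H} {r : H → H → Prop} (h : IsMulGoodOrdering S r) :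
    IsMulGoodOrdering (f '' S) (fun x y => r (invFun f x) (invFun f y)) := by
  obtain ⟨h₁, h₂, h₃, h₄⟩ := h
  refine ⟨?_, ?_, ?_, ?_⟩ <;>
    simp only [Set.forall_mem_image, ← map_mul, hf.mem_set_image, leftInverse_invFun hf _,
      hf.ne_iff]
  exacts [h₁, h₂, h₃, h₄]

theorem eq_zero_of_isOfFinAddOrder_coe_aeval {α : ℝ} (hα : Transcendental ℤ α) {q : ℤ[X]}
    (hq : q.coeff 0 = 0) (h : IsOfFinAddOrder (aeval α q : UnitAddCircle)) : q = 0 := by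
  obtain ⟨m, hm, hmq⟩ := isOfFinAddOrder_iff_nsmul_eq_zero.mp h
  rw [← AddCircle.coe_nsmul, AddCircle.coe_eq_zero_iff] at hmq
  obtain ⟨z, hz⟩ := hmq
  have hroot : m • q - C z = 0 := by
    refine (transcendental_iff_injective.mp hα) ?_
    simp only [zsmul_eq_mul, mul_one, nsmul_eq_mul] at hz
    simp [← hz]
  have hz0 : z = 0 := by simpa [hq] using congrArg (coeff · 0) hroot
  simpa [hz0, hm.ne'] using hroot

theorem exists_addMonoidHom_unitAddCircle_eq_zero_of_isOfFinAddOrder (n : ℕ) :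
    ∃ ψ : (Fin n → ℤ) →+ UnitAddCircle, ∀ v, IsOfFinAddOrder (ψ v) → v = 0 := by
  let shift : (Fin n → ℤ) →ₗ[ℤ] ℤ[X] := (LinearMap.mulLeft ℤ X).comp (ofFn n)
  have hshift : ∀ v, shift v = 0 → v = 0 := fun v hv => funext fun i => by
    simpa using congrArg (coeff · i) ((mul_eq_zero.mp hv).resolve_left X_ne_zero)
  refine ⟨(QuotientAddGroup.mk' _).comp
    ((aeval (liouvilleNumber 3)).toAddMonoidHom.comp shift.toAddMonoidHom), fun v hv => ?_⟩
  refine hshift v (eq_zero_of_isOfFinAddOrder_coe_aeval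
    (transcendental_liouvilleNumber (by norm_num)) ?_ hv)
  simp [shift]

theorem AddMonoidHom.coprod_injective_of_isAddTorsion {M P C : Type*} [AddCommGroup M]
    [AddCommGroup P] [AddCommGroup C] {ψ : M →+ C} (hψ : ∀ v, IsOfFinAddOrder (ψ v) → v = 0)
    {τ : P →+ C} (hτ : Injective τ) (hP : IsAddTorsion P) :
    Injective (ψ.coprod τ) := by
  refine (injective_iff_map_eq_zero _).mpr fun ⟨v, t⟩ h => ?_
  rw [coprod_apply, add_eq_zero_iff_eq_neg] at h
  obtain rfl : v = 0 := hψ v (h ▸ (τ.isOfFinAddOrder (hP t)).neg)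
  rw [map_zero, zero_eq_neg, ← map_zero τ] at h
  exact Prod.ext rfl (hτ h)

theorem exists_injective_unitAddCircle_of_isAddCyclic (P : Type*) [AddGroup P] [Finite P]
    [h : IsAddCyclic P] : ∃ τ : P →+ UnitAddCircle, Injective τ :=
  ⟨ZMod.toAddCircle.comp (zmodAddCyclicAddEquiv h).symm.toAddMonoidHom,
    (ZMod.toAddCircle_injective _).comp (zmodAddCyclicAddEquiv h).symm.injective⟩

theorem CommGroup.exists_injective_unitAddCircle (G : Type*) [CommGroup G] [Group.FG G]
    (hG : ∀ K : Subgroup G, Finite K → IsCyclic K) :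
    ∃ φ : Additive G →+ UnitAddCircle, Injective φ := by
  obtain ⟨n, ι, _, p, hp, e, ⟨f⟩⟩ := AddCommGroup.equiv_free_prod_directSum_zmod (Additive G)
  have (i : ι) : NeZero (p i ^ e i) := ⟨pow_ne_zero _ (hp i).ne_zero⟩
  have : Finite (⨁ i, ZMod (p i ^ e i)) := .of_equiv _ DFinsupp.equivFunOnFintype.symm
  have : IsAddCyclic (⨁ i, ZMod (p i ^ e i)) := by
    let j := AddMonoidHom.toMultiplicativeLeft (f.symm.toAddMonoidHom.comp (.inr _ _))
    have hj : Injective j := f.symm.injective.comp fun a b h => congrArg Prod.snd h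
    have : IsCyclic j.range := hG _ (Set.finite_range j).to_subtype
    exact isCyclic_multiplicative_iff.mp (isCyclic_of_injective j.rangeRestrict
      (j.rangeRestrict_injective_iff.mpr hj))
  obtain ⟨ψ, hψ⟩ := exists_addMonoidHom_unitAddCircle_eq_zero_of_isOfFinAddOrder n
  obtain ⟨τ, hτ⟩ := exists_injective_unitAddCircle_of_isAddCyclic (⨁ i, ZMod (p i ^ e i))
  let g := f.trans (Finsupp.addEquivFunOnFinite.prodCongr (AddEquiv.refl _))
  exact ⟨(ψ.coprod τ).comp g.toAddMonoidHom,
    (AddMonoidHom.coprod_injective_of_isAddTorsion hψ hτ isAddTorsion_of_finite).comp g.injective⟩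

/-- Every finite subset of the multiplicative group of a field admits a good-ordering. -/
theorem field_units_goodOrdering {F : Type*} [Field F] (X : Set Fˣ) (hX : X.Finite) :
    ∃ r : Fˣ → Fˣ → Prop, IsMulGoodOrdering X r := by
  let H := Subgroup.closure X
  have : Finite X := hX
  have : Group.FG H := Group.closure_finite_fg X
  obtain ⟨φ, hφ⟩ := CommGroup.exists_injective_unitAddCircle H fun K _ =>
    isCyclic_of_injective_ringHom ((Units.coeHom F).comp (H.subtype.comp K.subtype))
      (Units.val_injective.comp (Subtype.val_injective.comp Subtype.val_injective))
  have := (IsMulGoodOrdering.of_injOn_addCircle (𝕜 := ℝ) φ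
    (hφ.comp Additive.ofMul.injective).injOn).image (S := H.subtype ⁻¹' X) H.subtype_injective
  rw [Set.image_preimage_eq_of_subset (by simp [H, Subgroup.subset_closure])] at this
  exact ⟨_, this⟩
end

section
/- (Reduction to abelian subgroups) Let L = ⊕_{g ∈ G} L_g be a Lie algebra over a field F graded by an arbitrary group (G,·) (so [L_g, L_h] ⊆ L_{g·h}). Then for elements g_1, ..., g_n ∈ G, if the left-normed bracket [L_{g_1}, L_{g_2}, ..., L_{g_n}] is nonzero, then g_1, ..., g_n commute pairwise. Consequently, the n-th term L^n of the lower central series of L is spanned by the subalgebras L_A^n, where A ranges over the abelian subgroups of G and L_A := ⊕_{a ∈ A} L_a. -/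
/-!
If `x ∈ L_g` and `y ∈ L_h` with `⁅x, y⁆ ≠ 0`, then `⁅x, y⁆ ∈ L_{gh} ∩ L_{hg}` forces `gh = hg`.
For longer brackets one shows, by induction on the length of `m = [x₁, …, xₙ]`, that
`⁅m, y⁆ ≠ 0` makes the degree `h` of `y` commute with every degree `gᵢ`. Writing `m = ⁅m', b⁆`,
the Jacobi identity `⁅⁅m', b⁆, y⁆ = ⁅⁅m', y⁆, b⁆ + ⁅m', ⁅b, y⁆⁆` gives either `⁅m', y⁆ ≠ 0` and
`⁅⁅m', y⁆, b⁆ ≠ 0`, or `⁅b, y⁆ ≠ 0` and `⁅m', ⁅b, y⁆⁆ ≠ 0`; in both cases the claim for `m'`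
(applied to `b` and to `y`, resp. to `⁅b, y⁆`) finishes the step. Hence the degrees of a nonzero
left-normed bracket of homogeneous elements generate an abelian subgroup, and since `Lⁿ` is
spanned by such brackets, it is spanned by the `L_Aⁿ` with `A` abelian.
-/

/-- The left-normed Lie bracket `[a, b₁, b₂, …]`. -/
def leftBracket {L : Type*} [LieRing L] : L → List L → L
  | a, [] => a
  | a, b :: t => leftBracket ⁅a, b⁆ t

section LeftBracket

variable {L : Type*} [LieRing L]

lemma leftBracket_append (a : L) (l : List L) (y : L) :
    leftBracket a (l ++ [y]) = ⁅leftBracket a l, y⁆ := by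
  induction l generalizing a with
  | nil => rfl
  | cons b t ih => exact ih ⁅a, b⁆

def leftBracketFin {n : ℕ} (x : Fin (n + 1) → L) : L :=
  leftBracket (x 0) (List.ofFn fun i : Fin n => x i.succ)

lemma leftBracketFin_succ {n : ℕ} (x : Fin (n + 2) → L) :
    leftBracketFin x = ⁅leftBracketFin (Fin.init x), x (Fin.last _)⁆ := by
  rw [leftBracketFin, List.ofFn_succ', List.concat_eq_append, leftBracket_append]
  rfl

lemma leftBracketFin_snoc {n : ℕ} (x : Fin (n + 1) → L) (y : L) :
    leftBracketFin (Fin.snoc x y : Fin (n + 2) → L) = ⁅leftBracketFin x, y⁆ := by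
  rw [leftBracketFin_succ, Fin.init_snoc, Fin.snoc_last]

end LeftBracket

section LowerCentralSeries

variable {R L : Type*} [CommRing R] [LieRing L] [LieAlgebra R L]

open LieModule

lemma leftBracketFin_mem_lowerCentralSeries {n : ℕ} (x : Fin (n + 1) → L) :
    leftBracketFin x ∈ lowerCentralSeries R L L n := by
  induction n with
  | zero => exact LieSubmodule.mem_top _
  | succ n ih =>
    rw [leftBracketFin_succ, LieModule.lowerCentralSeries_succ, ← lie_skew]
    exact neg_mem (LieSubmodule.lie_mem_lie (LieSubmodule.mem_top _) (ih _))

theorem lowerCentralSeries_eq_span_leftBracketFin {X : Set L}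
    (hX : Submodule.span R X = ⊤) (n : ℕ) :
    (lowerCentralSeries R L L n : Submodule R L) =
      Submodule.span R (leftBracketFin '' {x : Fin (n + 1) → L | ∀ i, x i ∈ X}) := by
  refine le_antisymm ?_ (Submodule.span_le.mpr ?_)
  · induction n with
    | zero =>
      rw [LieIdeal.toLieSubalgebra_toSubmodule, lowerCentralSeries_zero,
        LieSubmodule.top_toSubmodule, ← hX]
      exact Submodule.span_mono fun z hz => ⟨fun _ => z, fun _ => hz, rfl⟩
    | succ n ih =>
      rw [LieIdeal.toLieSubalgebra_toSubmodule, LieModule.lowerCentralSeries_succ,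
        LieSubmodule.lieIdeal_oper_eq_linear_span', Submodule.span_le]
      rintro _ ⟨u, -, m, hm, rfl⟩
      have hu : u ∈ Submodule.span R X := hX ▸ Submodule.mem_top
      have hmu := Submodule.apply_mem_map₂ (toEnd R L L : L →ₗ[R] Module.End R L) (ih hm) hu
      rw [Submodule.map₂_span_span] at hmu
      rw [← lie_skew]
      refine neg_mem (Submodule.span_mono ?_ hmu)
      rintro _ ⟨_, ⟨x, hx, rfl⟩, v, hv, rfl⟩
      refine ⟨Fin.snoc x v, fun i => ?_, leftBracketFin_snoc x v⟩
      induction i using Fin.lastCases with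
      | last => simpa using hv
      | cast i => simpa using hx i
  · rintro _ ⟨x, -, rfl⟩
    exact leftBracketFin_mem_lowerCentralSeries x

end LowerCentralSeries

lemma Commute.of_mul_right {G : Type*} [Group G] {a b c : G} (hb : Commute a b)
    (hbc : Commute a (b * c)) : Commute a c := by
  simpa using hb.inv_right.mul_right hbc

section Grading

open Function

variable {R G L : Type*} [Ring R] [Group G] [LieRing L] [Module R L] {Lg : G → Submodule R L}

lemma commute_of_lie_ne_zero (hdisj : Pairwise (Disjoint on Lg))
    (hgr : ∀ g h : G, ∀ x ∈ Lg g, ∀ y ∈ Lg h, ⁅x, y⁆ ∈ Lg (g * h))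
    {g h : G} {x y : L} (hx : x ∈ Lg g) (hy : y ∈ Lg h) (hxy : ⁅x, y⁆ ≠ 0) : Commute g h := by
  by_contra hne
  have hyx : ⁅x, y⁆ ∈ Lg (h * g) := by
    rw [← lie_skew]
    exact neg_mem (hgr h g y hy x hx)
  exact hxy (Submodule.disjoint_def.mp (hdisj hne) _ (hgr g h x hx y hy) hyx)

lemma leftBracketFin_mem_prod (hgr : ∀ g h : G, ∀ x ∈ Lg g, ∀ y ∈ Lg h, ⁅x, y⁆ ∈ Lg (g * h))
    {n : ℕ} {gs : Fin (n + 1) → G} {x : Fin (n + 1) → L} (hx : ∀ i, x i ∈ Lg (gs i)) :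
    leftBracketFin x ∈ Lg (List.ofFn gs).prod := by
  induction n with
  | zero => simpa [leftBracketFin, leftBracket] using hx 0
  | succ n ih =>
    rw [leftBracketFin_succ, List.ofFn_succ', List.prod_concat]
    exact hgr _ _ _ (ih fun i => hx _) _ (hx _)

lemma commute_of_lie_leftBracketFin_ne_zero (hdisj : Pairwise (Disjoint on Lg))
    (hgr : ∀ g h : G, ∀ x ∈ Lg g, ∀ y ∈ Lg h, ⁅x, y⁆ ∈ Lg (g * h))
    {n : ℕ} {gs : Fin (n + 1) → G} {x : Fin (n + 1) → L} (hx : ∀ i, x i ∈ Lg (gs i))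
    {h : G} {y : L} (hy : y ∈ Lg h) (hne : ⁅leftBracketFin x, y⁆ ≠ 0) :
    ∀ i, Commute (gs i) h := by
  induction n generalizing h y with
  | zero =>
    intro i
    rw [Subsingleton.elim (α := Fin 1) i 0]
    exact commute_of_lie_ne_zero hdisj hgr (hx 0) hy hne
  | succ n ih =>
    rw [leftBracketFin_succ] at hne
    set m := leftBracketFin (Fin.init x)
    set d := gs (Fin.last _)
    have hxinit : ∀ i, Fin.init x i ∈ Lg (Fin.init gs i) := fun i => hx _
    have hb : x (Fin.last _) ∈ Lg d := hx _
    have hd : ∀ i, Commute (Fin.init gs i) d :=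
      ih hxinit hb fun h0 => hne (by rw [h0, zero_lie])
    have hjacobi : ⁅⁅m, x (Fin.last _)⁆, y⁆ =
        ⁅⁅m, y⁆, x (Fin.last _)⁆ + ⁅m, ⁅x (Fin.last _), y⁆⁆ := by
      rw [lie_lie, ← lie_skew ⁅m, y⁆, sub_eq_neg_add]
    suffices Commute d h ∧ ∀ i, Commute (Fin.init gs i) h from
      Fin.lastCases this.1 this.2
    rcases eq_or_ne ⁅⁅m, y⁆, x (Fin.last _)⁆ 0 with hA | hA
    · have hB : ⁅m, ⁅x (Fin.last _), y⁆⁆ ≠ 0 := by rwa [hjacobi, hA, zero_add] at hne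
      have hdh : Commute d h := commute_of_lie_ne_zero hdisj hgr hb hy
        fun h0 => hB (by rw [h0, lie_zero])
      exact ⟨hdh, fun i => (hd i).of_mul_right (ih hxinit (hgr _ _ _ hb _ hy) hB i)⟩
    · have hmy := hgr _ _ _ (leftBracketFin_mem_prod hgr hxinit) _ hy
      have hP : Commute d (List.ofFn (Fin.init gs)).prod :=
        (Commute.list_prod_left _ _ fun g hg => by
          obtain ⟨i, rfl⟩ := List.mem_ofFn.mp hg
          exact hd i).symm
      exact ⟨hP.of_mul_right (commute_of_lie_ne_zero hdisj hgr hmy hb hA).symm,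
        ih hxinit hy fun h0 => hA (by rw [h0, zero_lie])⟩

theorem commute_of_leftBracketFin_ne_zero (hdisj : Pairwise (Disjoint on Lg))
    (hgr : ∀ g h : G, ∀ x ∈ Lg g, ∀ y ∈ Lg h, ⁅x, y⁆ ∈ Lg (g * h))
    {n : ℕ} {gs : Fin (n + 1) → G} {x : Fin (n + 1) → L} (hx : ∀ i, x i ∈ Lg (gs i))
    (hne : leftBracketFin x ≠ 0) : ∀ i j, Commute (gs i) (gs j) := by
  induction n with
  | zero =>
    intro i j
    rw [Subsingleton.elim (α := Fin 1) i j]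
  | succ n ih =>
    rw [leftBracketFin_succ] at hne
    have hxinit : ∀ i, Fin.init x i ∈ Lg (Fin.init gs i) := fun i => hx _
    have hinit := ih hxinit fun h0 => hne (by rw [h0, zero_lie])
    have hlast := commute_of_lie_leftBracketFin_ne_zero hdisj hgr hxinit (hx _) hne
    intro i j
    induction i using Fin.lastCases <;> induction j using Fin.lastCases
    · rfl
    · exact (hlast _).symm
    · exact hlast _
    · exact hinit _ _

end Grading

/-- Reduction to abelian subgroups: in a group-graded Lie algebra, a nonzero left-normed
bracket of homogeneous elements forces the degrees to commute pairwise; consequently each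
term of the lower central series is spanned by left-normed brackets of homogeneous
elements whose degrees lie in a common abelian subgroup. -/
theorem graded_reduction_to_abelian {F G L : Type*} [Field F] [Group G] [DecidableEq G]
    [LieRing L] [LieAlgebra F L] (Lg : G → Submodule F L)
    (hint : DirectSum.IsInternal Lg)
    (hgr : ∀ g h : G, ∀ x ∈ Lg g, ∀ y ∈ Lg h, ⁅x, y⁆ ∈ Lg (g * h)) :
    (∀ n : ℕ, ∀ gs : Fin (n + 1) → G, ∀ x : Fin (n + 1) → L,
      (∀ i, x i ∈ Lg (gs i)) →
      leftBracket (x 0) (List.ofFn fun i : Fin n => x i.succ) ≠ 0 →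
      ∀ i j, gs i * gs j = gs j * gs i) ∧
    (∀ n : ℕ, (LieModule.lowerCentralSeries F L L n : Submodule F L) =
      Submodule.span F { z : L |
        ∃ (A : Subgroup G) (gs : Fin (n + 1) → G) (x : Fin (n + 1) → L),
          (∀ a ∈ A, ∀ b ∈ A, a * b = b * a) ∧ (∀ i, gs i ∈ A) ∧
          (∀ i, x i ∈ Lg (gs i)) ∧
          z = leftBracket (x 0) (List.ofFn fun i : Fin n => x i.succ) }) := by
  have hdisj := hint.submodule_iSupIndep.pairwiseDisjoint
  refine ⟨fun n gs x hx hne => commute_of_leftBracketFin_ne_zero hdisj hgr hx hne, fun n => ?_⟩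
  have hspan : Submodule.span F (⋃ g, (Lg g : Set L)) = ⊤ := by
    simpa only [Submodule.span_iUnion, Submodule.span_eq] using hint.submodule_iSup_eq_top
  rw [lowerCentralSeries_eq_span_leftBracketFin hspan]
  refine le_antisymm (Submodule.span_le.mpr ?_) (Submodule.span_mono ?_)
  · rintro _ ⟨x, hx, rfl⟩
    choose gs hgs using fun i => Set.mem_iUnion.mp (hx i)
    by_cases h0 : leftBracketFin x = 0
    · rw [h0]
      exact zero_mem _
    have hA : ∀ a ∈ Subgroup.closure (Set.range gs), ∀ b ∈ Subgroup.closure (Set.range gs),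
        a * b = b * a := by
      refine isMulCommutative_iff_of_setLike.mp (Subgroup.isMulCommutative_closure ?_)
      rintro _ ⟨i, rfl⟩ _ ⟨j, rfl⟩
      exact commute_of_leftBracketFin_ne_zero hdisj hgr hgs h0 i j
    exact Submodule.subset_span
      ⟨_, gs, x, hA, fun i => Subgroup.subset_closure ⟨i, rfl⟩, hgs, rfl⟩
  · rintro _ ⟨A, gs, x, -, -, hx, rfl⟩
    exact ⟨x, fun i => Set.mem_iUnion.mpr ⟨gs i, hx i⟩, rfl⟩
end

section
/- Let r(z) ∈ F[z] be an irreducible polynomial over F, where F = ℚ or F = 𝔽_p, with r(0)·r(1) ≠ 0. Then the set X of roots of r in an algebraic closure of F is an arithmetically-free subset of the multiplicative group (F̄^×, ·). -/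
/-!
If `x * y ^ n` is a root of `r` for every `n : ℤ`, then finiteness of the root set forces `y` to
have finite order `m`. All roots of the irreducible `r` share the minimal polynomial of `y`, so
they are all `m`-th roots of unity; since `y` is a primitive `m`-th root of unity, `x⁻¹ = y ^ i`
for some `i`, and then `1 = x * y ^ i` is a root of `r`, contradicting `r(1) ≠ 0`.
-/

open Polynomial

theorem isOfFinOrder_of_forall_mul_zpow_mem {G₀ : Type*} [GroupWithZero G₀] {s : Set G₀}
    (hs : s.Finite) {x y : G₀} (hx : x ≠ 0) (hy : y ≠ 0) (h : ∀ n : ℤ, x * y ^ n ∈ s) :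
    IsOfFinOrder y := by
  obtain ⟨a, -, b, -, hab, hxab⟩ :=
    Set.infinite_univ.exists_ne_map_eq_of_mapsTo (fun n _ ↦ h n) hs
  refine isOfFinOrder_iff_zpow_eq_one.2 ⟨a - b, sub_ne_zero.2 hab, ?_⟩
  rw [zpow_sub₀ hy, mul_left_cancel₀ hx hxab, div_self (zpow_ne_zero b hy)]

namespace Polynomial

variable {F K : Type*} [Field F] [Field K] [Algebra F K] {r : F[X]}

theorem algebraMap_ne_of_mem_rootSet {z : K} (hz : z ∈ r.rootSet K) {a : F}
    (ha : r.eval a ≠ 0) : z ≠ algebraMap F K a := by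
  rintro rfl
  rw [mem_rootSet', aeval_algebraMap_apply, map_eq_zero, coe_aeval_eq_eval] at hz
  exact ha hz.2

theorem minpoly_eq_of_mem_rootSet (hr : Irreducible r) {y z : K} (hy : y ∈ r.rootSet K)
    (hz : z ∈ r.rootSet K) : minpoly F y = minpoly F z := by
  rw [← minpoly.eq_of_irreducible hr (aeval_eq_zero_of_mem_rootSet hy),
    minpoly.eq_of_irreducible hr (aeval_eq_zero_of_mem_rootSet hz)]

theorem pow_eq_one_of_mem_rootSet (hr : Irreducible r) {y z : K} (hy : y ∈ r.rootSet K)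
    (hz : z ∈ r.rootSet K) {m : ℕ} (hym : y ^ m = 1) : z ^ m = 1 := by
  have hdvd : minpoly F z ∣ X ^ m - 1 := by
    rw [← minpoly_eq_of_mem_rootSet hr hy hz, minpoly.dvd_iff]
    simp [hym]
  simpa [sub_eq_zero] using minpoly.dvd_iff.1 hdvd

theorem not_exists_mul_zpow_mem_rootSet (hr : Irreducible r) (h0 : r.eval 0 ≠ 0) (h1 : r.eval 1 ≠ 0) :
    ¬ ∃ x ∈ r.rootSet K, ∃ y ∈ r.rootSet K, ∀ n : ℤ, x * y ^ n ∈ r.rootSet K := by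
  rintro ⟨x, hx, y, hy, h⟩
  have hx0 : x ≠ 0 := by simpa using algebraMap_ne_of_mem_rootSet hx h0
  have hy0 : y ≠ 0 := by simpa using algebraMap_ne_of_mem_rootSet hy h0
  have hfin := isOfFinOrder_of_forall_mul_zpow_mem (r.rootSet_finite K) hx0 hy0 h
  have : NeZero (orderOf y) := ⟨hfin.orderOf_pos.ne'⟩
  have hxinv : x⁻¹ ^ orderOf y = 1 := by
    rw [inv_pow, pow_eq_one_of_mem_rootSet hr hy hx (pow_orderOf_eq_one y), inv_one]
  obtain ⟨i, -, hi⟩ := (IsPrimitiveRoot.orderOf y).eq_pow_of_pow_eq_one hxinv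
  have h1mem : (1 : K) ∈ r.rootSet K := by
    simpa [hi, hx0] using h i
  exact algebraMap_ne_of_mem_rootSet h1mem h1 (map_one _).symm

end Polynomial

/-- For `F = ℚ` or `F = 𝔽_p`: the root set of an irreducible polynomial `r` over `F` with
`r(0)·r(1) ≠ 0` is arithmetically-free in the multiplicative group of the algebraic
closure of `F`. -/
theorem rootSet_arithmeticallyFree :
    (∀ r : Polynomial ℚ, Irreducible r → r.eval 0 * r.eval 1 ≠ 0 →
      ¬ ∃ x ∈ r.rootSet (AlgebraicClosure ℚ), ∃ y ∈ r.rootSet (AlgebraicClosure ℚ),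
        ∀ n : ℤ, x * y ^ n ∈ r.rootSet (AlgebraicClosure ℚ)) ∧
    (∀ (p : ℕ) [Fact p.Prime], ∀ r : Polynomial (ZMod p), Irreducible r →
      r.eval 0 * r.eval 1 ≠ 0 →
      ¬ ∃ x ∈ r.rootSet (AlgebraicClosure (ZMod p)),
        ∃ y ∈ r.rootSet (AlgebraicClosure (ZMod p)),
          ∀ n : ℤ, x * y ^ n ∈ r.rootSet (AlgebraicClosure (ZMod p))) :=
  ⟨fun _ hr h01 ↦ not_exists_mul_zpow_mem_rootSet hr (left_ne_zero_of_mul h01)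
      (right_ne_zero_of_mul h01),
    fun _ _ _ hr h01 ↦ not_exists_mul_zpow_mem_rootSet hr (left_ne_zero_of_mul h01)
      (right_ne_zero_of_mul h01)⟩
end
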